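/- (1) If A ∈ Ω⁺ (resp. A ∈ Ω⁻) and A ≈ B, then B ∈ Ω⁺ (resp. B ∈ Ω⁻). (2) If A ∈ Ω⁻ and A ⊲ B → C, then B ∈ Ω⁺ and C ∈ Ω⁻. (Lemma 4.1) -/

import Mathlib

namespace MixedLogic

/-! ### First-order terms of the language (constant 0, unary successor s) -/

inductive Trm : Type
  | var  : ℕ → Trm
  | zero : Trm
  | succ : Trm → Trm

def Trm.subst : Trm → ℕ → Trm → Trm
  | .var y, x, u => if y = x then u else .var y
  | .zero, _, _ => .zero
  | .succ t, x, u => .succ (t.subst x u)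

def Trm.fv : Trm → Set ℕ
  | .var y => {y}
  | .zero => ∅
  | .succ t => t.fv

/-- the term sⁿ(0) -/
def Trm.num : ℕ → Trm
  | 0 => .zero
  | n + 1 => .succ (Trm.num n)

/-- `TrmEq E a b` : the equation a = b is a consequence of the set of equations E. -/
inductive TrmEq (E : Set (Trm × Trm)) : Trm → Trm → Prop
  | ax {a b} : (a, b) ∈ E → TrmEq E a b
  | refl (a) : TrmEq E a a
  | symm {a b} : TrmEq E a b → TrmEq E b a
  | trans {a b c} : TrmEq E a b → TrmEq E b c → TrmEq E a c
  | succ_congr {a b} : TrmEq E a b → TrmEq E (.succ a) (.succ b)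
  | subst {a b} (x : ℕ) (u : Trm) : TrmEq E a b → TrmEq E (a.subst x u) (b.subst x u)

/-- E is adequate with the type of integers. -/
def Adequate (E : Set (Trm × Trm)) : Prop :=
  (∀ a, ¬ TrmEq E (.succ a) .zero) ∧ ∀ a b, TrmEq E (.succ a) (.succ b) → TrmEq E a b

/-- Indices of ordinary second-order variables.  The variables `Sum.inr n` are the
reserved *special* variables: `Sum.inr n` is the variable `X*` associated with the
classical variable `n` by the Gödel translation. -/
abbrev PIdx : Type := ℕ ⊕ ℕ

/-! ### Formulas (= types) -/

inductive Fm : Type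
  | bot   : Fm
  | pvar  : PIdx → List Trm → Fm     -- ordinary second-order (predicate) variable
  | cvar  : ℕ → List Trm → Fm        -- classical second-order variable X_C
  | psym  : ℕ → List Trm → Fm        -- predicate symbol of the language (psym 0 is O)
  | arr   : Fm → Fm → Fm
  | fall  : ℕ → Fm → Fm              -- first-order ∀
  | Fall  : PIdx → Fm → Fm           -- second-order ∀ over an ordinary variable
  | CFall : ℕ → Fm → Fm              -- second-order ∀ over a classical variable

def Fm.neg (A : Fm) : Fm := A.arr .bot

/-- substitution of a first-order term for a first-order variable -/
def Fm.substT : Fm → ℕ → Trm → Fm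
  | .bot, _, _ => .bot
  | .pvar X ts, x, u => .pvar X (ts.map (Trm.subst · x u))
  | .cvar X ts, x, u => .cvar X (ts.map (Trm.subst · x u))
  | .psym P ts, x, u => .psym P (ts.map (Trm.subst · x u))
  | .arr A B, x, u => .arr (A.substT x u) (B.substT x u)
  | .fall y A, x, u => if y = x then .fall y A else .fall y (A.substT x u)
  | .Fall X A, x, u => .Fall X (A.substT x u)
  | .CFall X A, x, u => .CFall X (A.substT x u)

/-- A second-order substituend: a formula together with its list of
first-order parameters (for an n-ary second-order variable). -/
abbrev Sop : Type := List ℕ × Fm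

def Fm.msubstT (A : Fm) (xs : List ℕ) (ts : List Trm) : Fm :=
  (xs.zip ts).foldl (fun B p => B.substT p.1 p.2) A

/-- substitution of a formula (with parameters) for an ordinary second-order variable -/
def Fm.substP : Fm → PIdx → Sop → Fm
  | .bot, _, _ => .bot
  | .pvar Y ts, X, G => if Y = X then G.2.msubstT G.1 ts else .pvar Y ts
  | .cvar Y ts, _, _ => .cvar Y ts
  | .psym P ts, _, _ => .psym P ts
  | .arr A B, X, G => .arr (A.substP X G) (B.substP X G)
  | .fall y A, X, G => .fall y (A.substP X G)
  | .Fall Y A, X, G => if Y = X then .Fall Y A else .Fall Y (A.substP X G)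
  | .CFall Y A, X, G => .CFall Y (A.substP X G)

/-- substitution of a formula (with parameters) for a classical second-order variable -/
def Fm.substC : Fm → ℕ → Sop → Fm
  | .bot, _, _ => .bot
  | .pvar Y ts, _, _ => .pvar Y ts
  | .cvar Y ts, X, G => if Y = X then G.2.msubstT G.1 ts else .cvar Y ts
  | .psym P ts, _, _ => .psym P ts
  | .arr A B, X, G => .arr (A.substC X G) (B.substC X G)
  | .fall y A, X, G => .fall y (A.substC X G)
  | .Fall Y A, X, G => .Fall Y (A.substC X G)
  | .CFall Y A, X, G => if Y = X then .CFall Y A else .CFall Y (A.substC X G)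

/-! ### Free variables -/

def Fm.fvT : Fm → Set ℕ
  | .bot => ∅
  | .pvar _ ts => {x | ∃ t ∈ ts, x ∈ t.fv}
  | .cvar _ ts => {x | ∃ t ∈ ts, x ∈ t.fv}
  | .psym _ ts => {x | ∃ t ∈ ts, x ∈ t.fv}
  | .arr A B => A.fvT ∪ B.fvT
  | .fall y A => A.fvT \ {y}
  | .Fall _ A => A.fvT
  | .CFall _ A => A.fvT

def Fm.fvP : Fm → Set PIdx
  | .bot => ∅
  | .pvar X _ => {X}
  | .cvar _ _ => ∅
  | .psym _ _ => ∅
  | .arr A B => A.fvP ∪ B.fvP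
  | .fall _ A => A.fvP
  | .Fall X A => A.fvP \ {X}
  | .CFall _ A => A.fvP

def Fm.fvC : Fm → Set ℕ
  | .bot => ∅
  | .pvar _ _ => ∅
  | .cvar X _ => {X}
  | .psym _ _ => ∅
  | .arr A B => A.fvC ∪ B.fvC
  | .fall _ A => A.fvC
  | .Fall _ A => A.fvC
  | .CFall X A => A.fvC \ {X}

/-! ### Classes of formulas -/

inductive Fm.Atom : Fm → Prop
  | bot : Fm.Atom .bot
  | pvar (X ts) : Fm.Atom (.pvar X ts)
  | cvar (X ts) : Fm.Atom (.cvar X ts)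
  | psym (P ts) : Fm.Atom (.psym P ts)

/-- A classical type : a type ending with ⊥ or with a classical variable. -/
inductive Fm.IsClassical : Fm → Prop
  | bot : Fm.IsClassical .bot
  | cvar (X ts) : Fm.IsClassical (.cvar X ts)
  | arr (A) {B} : B.IsClassical → Fm.IsClassical (.arr A B)
  | fall (x) {A} : A.IsClassical → Fm.IsClassical (.fall x A)
  | Fall (X) {A} : A.IsClassical → Fm.IsClassical (.Fall X A)
  | CFall (X) {A} : A.IsClassical → Fm.IsClassical (.CFall X A)

/-- a type ending with ⊥ -/
inductive Fm.EndsBot : Fm → Prop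
  | bot : Fm.EndsBot .bot
  | arr (A) {B} : B.EndsBot → Fm.EndsBot (.arr A B)
  | fall (x) {A} : A.EndsBot → Fm.EndsBot (.fall x A)
  | Fall (X) {A} : A.EndsBot → Fm.EndsBot (.Fall X A)
  | CFall (X) {A} : A.EndsBot → Fm.EndsBot (.CFall X A)

/-- a type ending with the distinguished predicate symbol O (= psym 0) -/
inductive Fm.EndsO : Fm → Prop
  | psym (ts) : Fm.EndsO (.psym 0 ts)
  | arr (A) {B} : B.EndsO → Fm.EndsO (.arr A B)
  | fall (x) {A} : A.EndsO → Fm.EndsO (.fall x A)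
  | Fall (X) {A} : A.EndsO → Fm.EndsO (.Fall X A)
  | CFall (X) {A} : A.EndsO → Fm.EndsO (.CFall X A)

/-- formulas of AF2 / LAF2 / C2 / LC2 : no classical variables occur -/
def Fm.NoCVar : Fm → Prop
  | .bot => True
  | .pvar _ _ => True
  | .cvar _ _ => False
  | .psym _ _ => True
  | .arr A B => A.NoCVar ∧ B.NoCVar
  | .fall _ A => A.NoCVar
  | .Fall _ A => A.NoCVar
  | .CFall _ _ => False

/-- formulas of LM2 : none of the reserved special variables `X*` occurs -/
def Fm.NoSpecial : Fm → Prop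
  | .bot => True
  | .pvar X _ => X.isLeft = true
  | .cvar _ _ => True
  | .psym _ _ => True
  | .arr A B => A.NoSpecial ∧ B.NoSpecial
  | .fall _ A => A.NoSpecial
  | .Fall X A => X.isLeft = true ∧ A.NoSpecial
  | .CFall _ A => A.NoSpecial

/-- propositional formulas (system M) -/
def Fm.IsProp : Fm → Prop
  | .bot => True
  | .pvar _ ts => ts = []
  | .cvar _ ts => ts = []
  | .psym _ ts => ts = []
  | .arr A B => A.IsProp ∧ B.IsProp
  | .fall _ _ => False
  | .Fall _ A => A.IsProp
  | .CFall _ A => A.IsProp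

/-! ### The relations ⊲ and ≈ on formulas -/

/-- the relation ⊲ of AF2 -/
inductive SubAF2 : Fm → Fm → Prop
  | refl (A) : SubAF2 A A
  | trans {A B C} : SubAF2 A B → SubAF2 B C → SubAF2 A C
  | fallT (x A u) : SubAF2 (.fall x A) (A.substT x u)
  | fallP (X A G) : SubAF2 (.Fall X A) (A.substP X G)

/-- the relation ⊲ of M2 -/
inductive SubM2 : Fm → Fm → Prop
  | refl (A) : SubM2 A A
  | trans {A B C} : SubM2 A B → SubM2 B C → SubM2 A C
  | fallT (x A u) : SubM2 (.fall x A) (A.substT x u)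
  | fallP (X A G) : SubM2 (.Fall X A) (A.substP X G)
  | fallC (X A) {G : Sop} : G.2.IsClassical → SubM2 (.CFall X A) (A.substC X G)

/-- the relation ≈ on formulas (relative to the set of equations E) -/
inductive FmEq (E : Set (Trm × Trm)) : Fm → Fm → Prop
  | base (F : Fm) (x : ℕ) {u v : Trm} : TrmEq E u v → FmEq E (F.substT x u) (F.substT x v)
  | refl (A) : FmEq E A A
  | trans {A B C} : FmEq E A B → FmEq E B C → FmEq E A C

/-! ### ∀-positive and ∀-negative types -/

mutual
  /-- Ω⁺ : ∀-positive types -/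
  inductive Fm.Pos : Fm → Prop
    | atom {A} : A.Atom → Fm.Pos A
    | arr {A B} : Fm.Neg A → Fm.Pos B → Fm.Pos (.arr A B)
    | fall (x) {A} : Fm.Pos A → Fm.Pos (.fall x A)
    | Fall (X) {A} : Fm.Pos A → Fm.Pos (.Fall X A)
  /-- Ω⁻ : ∀-negative types -/
  inductive Fm.Neg : Fm → Prop
    | atom {A} : A.Atom → Fm.Neg A
    | arr {A B} : Fm.Pos A → Fm.Neg B → Fm.Neg (.arr A B)
    | fall (x) {A} : Fm.Neg A → Fm.Neg (.fall x A)
    | Fall (X) {A} : X ∉ A.fvP → Fm.Neg A → Fm.Neg (.Fall X A)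
end

/-! ### Gödel translation and classical translation -/

/-- the Gödel translation A* (each classical variable `n` is replaced,
negated, by its associated special variable `Sum.inr n`) -/
def Fm.godel : Fm → Fm
  | .bot => .bot
  | .pvar X ts => .pvar X ts
  | .cvar X ts => .arr (.pvar (Sum.inr X) ts) .bot
  | .psym P ts => .psym P ts
  | .arr A B => .arr A.godel B.godel
  | .fall x A => .fall x A.godel
  | .Fall X A => .Fall X A.godel
  | .CFall X A => .Fall (Sum.inr X) A.godel

/-- the index of the classical variable X_C associated with an ordinary variable X -/
def cIdx : PIdx → ℕ := Sum.elim (fun n => 2 * n) (fun n => 2 * n + 1)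

/-- the classical translation A^C -/
def Fm.ctrans : Fm → Fm
  | .bot => .bot
  | .pvar X ts => .cvar (cIdx X) ts
  | .cvar X ts => .cvar X ts
  | .psym P ts => .psym P ts
  | .arr A B => .arr A.ctrans B.ctrans
  | .fall x A => .fall x A.ctrans
  | .Fall X A => .CFall (cIdx X) A.ctrans
  | .CFall X A => .CFall X A.ctrans

/-! ### λC-terms -/

/-- λ-terms with the constant C and stack constants `k n` -/
inductive Lam : Type
  | var : ℕ → Lam
  | app : Lam → Lam → Lam
  | lam : ℕ → Lam → Lam
  | C   : Lam
  | k   : ℕ → Lam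

def Lam.fv : Lam → Set ℕ
  | .var x => {x}
  | .app t u => t.fv ∪ u.fv
  | .lam x t => t.fv \ {x}
  | .C => ∅
  | .k _ => ∅

def Lam.subst : Lam → ℕ → Lam → Lam
  | .var y, x, u => if y = x then u else .var y
  | .app a b, x, u => .app (a.subst x u) (b.subst x u)
  | .lam y a, x, u => if y = x then .lam y a else .lam y (a.subst x u)
  | .C, _, _ => .C
  | .k n, _, _ => .k n

/-- simultaneous substitution σ -/
def Lam.msubst : Lam → (ℕ → Lam) → Lam
  | .var y, σ => σ y
  | .app a b, σ => .app (a.msubst σ) (b.msubst σ)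
  | .lam y a, σ => .lam y (a.msubst (Function.update σ y (.var y)))
  | .C, _ => .C
  | .k n, _ => .k n

/-- (t)u₁…uₙ -/
def Lam.appL (t : Lam) (l : List Lam) : Lam := l.foldl .app t

/-- t contains no occurrence of the constant C -/
def Lam.NoC : Lam → Prop
  | .var _ => True
  | .app a b => a.NoC ∧ b.NoC
  | .lam _ a => a.NoC
  | .C => False
  | .k _ => True

/-- t is a λC-term (contains no stack constant) -/
def Lam.IsLC : Lam → Prop
  | .var _ => True
  | .app a b => a.IsLC ∧ b.IsLC
  | .lam _ a => a.IsLC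
  | .C => True
  | .k _ => False

def Lam.Closed (t : Lam) : Prop := ∀ x, x ∉ t.fv

/-- one step of β-reduction (anywhere in the term) -/
inductive BetaStep : Lam → Lam → Prop
  | beta (x t u) : BetaStep (.app (.lam x t) u) (t.subst x u)
  | appL {t t'} (u) : BetaStep t t' → BetaStep (.app t u) (.app t' u)
  | appR (t) {u u'} : BetaStep u u' → BetaStep (.app t u) (.app t u')
  | lam (x) {t t'} : BetaStep t t' → BetaStep (.lam x t) (.lam x t')

/-- β-reduction -/
def BetaRed : Lam → Lam → Prop := Relation.ReflTransGen BetaStep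

/-- β-equivalence ≃β -/
def BetaConv : Lam → Lam → Prop :=
  Relation.ReflTransGen (fun a b => BetaStep a b ∨ BetaStep b a)

/-- t is β-normal : it contains no β-redex -/
def BetaNormal (t : Lam) : Prop := ∀ u, ¬ BetaStep t u

/-- one step of head C-reduction -/
inductive HeadStep : Lam → Lam → Prop
  | beta (x t u l) :
      HeadStep (Lam.appL (.app (.lam x t) u) l) (Lam.appL (t.subst x u) l)
  | cc (t l x) : (∀ s ∈ l, x ∉ Lam.fv s) →
      HeadStep (Lam.appL (.app .C t) l) (.app t (.lam x (Lam.appL (.var x) l)))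

/-- head C-reduction ≻_C -/
def HeadRed : Lam → Lam → Prop := Relation.ReflTransGen HeadStep

/-- the Church integer n̲ = λxλf(f)ⁿx -/
def church (n : ℕ) : Lam := .lam 0 (.lam 1 ((Lam.app (.var 1))^[n] (.var 0)))

/-! ### The type systems -/

abbrev Ctx : Type := List (ℕ × Fm)

/-- the intuitionistic type system AF2 -/
inductive AF2 (E : Set (Trm × Trm)) : Ctx → Lam → Fm → Prop
  | ax {Γ x A} : (x, A) ∈ Γ → AF2 E Γ (.var x) A
  | arrI {Γ x A t B} : AF2 E ((x, A) :: Γ) t B → AF2 E Γ (.lam x t) (.arr A B)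
  | arrE {Γ t u A B} : AF2 E Γ t (.arr A B) → AF2 E Γ u A → AF2 E Γ (.app t u) B
  | fallTI {Γ t A} (x) : (∀ p ∈ Γ, x ∉ Fm.fvT p.2) → AF2 E Γ t A → AF2 E Γ t (.fall x A)
  | fallTE {Γ t x A} (u : Trm) : AF2 E Γ t (.fall x A) → AF2 E Γ t (A.substT x u)
  | fallPI {Γ t A} (X) : (∀ p ∈ Γ, X ∉ Fm.fvP p.2) → AF2 E Γ t A → AF2 E Γ t (.Fall X A)
  | fallPE {Γ t X A} (G : Sop) : AF2 E Γ t (.Fall X A) → AF2 E Γ t (A.substP X G)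
  | eqr {Γ t A x u v} : AF2 E Γ t (Fm.substT A x u) → TrmEq E u v → AF2 E Γ t (Fm.substT A x v)

/-- the classical type system C2 = AF2 + C : ∀X(¬¬X → X) -/
inductive C2 (E : Set (Trm × Trm)) : Ctx → Lam → Fm → Prop
  | ax {Γ x A} : (x, A) ∈ Γ → C2 E Γ (.var x) A
  | arrI {Γ x A t B} : C2 E ((x, A) :: Γ) t B → C2 E Γ (.lam x t) (.arr A B)
  | arrE {Γ t u A B} : C2 E Γ t (.arr A B) → C2 E Γ u A → C2 E Γ (.app t u) B
  | fallTI {Γ t A} (x) : (∀ p ∈ Γ, x ∉ Fm.fvT p.2) → C2 E Γ t A → C2 E Γ t (.fall x A)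
  | fallTE {Γ t x A} (u : Trm) : C2 E Γ t (.fall x A) → C2 E Γ t (A.substT x u)
  | fallPI {Γ t A} (X) : (∀ p ∈ Γ, X ∉ Fm.fvP p.2) → C2 E Γ t A → C2 E Γ t (.Fall X A)
  | fallPE {Γ t X A} (G : Sop) : C2 E Γ t (.Fall X A) → C2 E Γ t (A.substP X G)
  | eqr {Γ t A x u v} : C2 E Γ t (Fm.substT A x u) → TrmEq E u v → C2 E Γ t (Fm.substT A x v)
  | Cax (Γ) (X : PIdx) :
      C2 E Γ .C (.Fall X (.arr (.arr (.arr (.pvar X []) .bot) .bot) (.pvar X [])))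

/-- the mixed type system M2 = AF2 + classical variables + C : ∀X_C(¬¬X_C → X_C) -/
inductive M2 (E : Set (Trm × Trm)) : Ctx → Lam → Fm → Prop
  | ax {Γ x A} : (x, A) ∈ Γ → M2 E Γ (.var x) A
  | arrI {Γ x A t B} : M2 E ((x, A) :: Γ) t B → M2 E Γ (.lam x t) (.arr A B)
  | arrE {Γ t u A B} : M2 E Γ t (.arr A B) → M2 E Γ u A → M2 E Γ (.app t u) B
  | fallTI {Γ t A} (x) : (∀ p ∈ Γ, x ∉ Fm.fvT p.2) → M2 E Γ t A → M2 E Γ t (.fall x A)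
  | fallTE {Γ t x A} (u : Trm) : M2 E Γ t (.fall x A) → M2 E Γ t (A.substT x u)
  | fallPI {Γ t A} (X) : (∀ p ∈ Γ, X ∉ Fm.fvP p.2) → M2 E Γ t A → M2 E Γ t (.Fall X A)
  | fallPE {Γ t X A} (G : Sop) : M2 E Γ t (.Fall X A) → M2 E Γ t (A.substP X G)
  | fallCI {Γ t A} (X) : (∀ p ∈ Γ, X ∉ Fm.fvC p.2) → M2 E Γ t A → M2 E Γ t (.CFall X A)
  | fallCE {Γ t X A} (G : Sop) : G.2.IsClassical →
      M2 E Γ t (.CFall X A) → M2 E Γ t (A.substC X G)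
  | eqr {Γ t A x u v} : M2 E Γ t (Fm.substT A x u) → TrmEq E u v → M2 E Γ t (Fm.substT A x v)
  | Cax (Γ) (X : ℕ) :
      M2 E Γ .C (.CFall X (.arr (.arr (.arr (.cvar X []) .bot) .bot) (.cvar X [])))

/-- the type system C2_O : C2 with λ-abstraction restricted to types not ending
with O and second-order ∀-elimination restricted to types not ending with O -/
inductive C2O (E : Set (Trm × Trm)) : Ctx → Lam → Fm → Prop
  | ax {Γ x A} : (x, A) ∈ Γ → C2O E Γ (.var x) A
  | arrI {Γ x A t B} : ¬ A.EndsO → ¬ B.EndsO →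
      C2O E ((x, A) :: Γ) t B → C2O E Γ (.lam x t) (.arr A B)
  | arrE {Γ t u A B} : C2O E Γ t (.arr A B) → C2O E Γ u A → C2O E Γ (.app t u) B
  | fallTI {Γ t A} (x) : (∀ p ∈ Γ, x ∉ Fm.fvT p.2) → C2O E Γ t A → C2O E Γ t (.fall x A)
  | fallTE {Γ t x A} (u : Trm) : C2O E Γ t (.fall x A) → C2O E Γ t (A.substT x u)
  | fallPI {Γ t A} (X) : (∀ p ∈ Γ, X ∉ Fm.fvP p.2) → C2O E Γ t A → C2O E Γ t (.Fall X A)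
  | fallPE {Γ t X A} (G : Sop) : ¬ G.2.EndsO →
      C2O E Γ t (.Fall X A) → C2O E Γ t (A.substP X G)
  | eqr {Γ t A x u v} : C2O E Γ t (Fm.substT A x u) → TrmEq E u v → C2O E Γ t (Fm.substT A x v)
  | Cax (Γ) (X : PIdx) :
      C2O E Γ .C (.Fall X (.arr (.arr (.arr (.pvar X []) .bot) .bot) (.pvar X [])))

/-- the propositional type system M (propositional fragment of M2) -/
inductive Mprop : Ctx → Lam → Fm → Prop
  | ax {Γ x A} : Fm.IsProp A → (x, A) ∈ Γ → Mprop Γ (.var x) A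
  | arrI {Γ x A t B} : Fm.IsProp A → Mprop ((x, A) :: Γ) t B → Mprop Γ (.lam x t) (.arr A B)
  | arrE {Γ t u A B} : Mprop Γ t (.arr A B) → Mprop Γ u A → Mprop Γ (.app t u) B
  | fallPI {Γ t A} (X) : (∀ p ∈ Γ, X ∉ Fm.fvP p.2) → Mprop Γ t A → Mprop Γ t (.Fall X A)
  | fallPE {Γ t X A} (G : Fm) : G.IsProp →
      Mprop Γ t (.Fall X A) → Mprop Γ t (A.substP X ([], G))
  | fallCI {Γ t A} (X) : (∀ p ∈ Γ, X ∉ Fm.fvC p.2) → Mprop Γ t A → Mprop Γ t (.CFall X A)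
  | fallCE {Γ t X A} (G : Fm) : G.IsProp → G.IsClassical →
      Mprop Γ t (.CFall X A) → Mprop Γ t (A.substC X ([], G))
  | Cax (Γ) (X : ℕ) :
      Mprop Γ .C (.CFall X (.arr (.arr (.arr (.cvar X []) .bot) .bot) (.cvar X [])))

/-! ### The underlying logics -/

def toCtx (Γ : List Fm) : Ctx := Γ.zipIdx.map Prod.swap

/-- provability in the intuitionistic second-order logic LAF2 -/
def LAF2Prov (E : Set (Trm × Trm)) (Γ : List Fm) (A : Fm) : Prop :=
  ∃ t, AF2 E (toCtx Γ) t A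

/-- provability in the classical second-order logic LC2 -/
def LC2Prov (E : Set (Trm × Trm)) (Γ : List Fm) (A : Fm) : Prop :=
  ∃ t, C2 E (toCtx Γ) t A

/-- provability in the mixed logic LM2 -/
def LM2Prov (E : Set (Trm × Trm)) (Γ : List Fm) (A : Fm) : Prop :=
  ∃ t, M2 E (toCtx Γ) t A

/-! ### The types of the integers -/

/-- N[a] = ∀X{X(0), ∀y(X(y) → X(sy)) → X(a)} -/
def NatF (a : Trm) : Fm :=
  .Fall (Sum.inl 0)
    (.arr (.pvar (Sum.inl 0) [Trm.zero])
      (.arr (.fall 1 (.arr (.pvar (Sum.inl 0) [Trm.var 1])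
                           (.pvar (Sum.inl 0) [Trm.succ (Trm.var 1)])))
        (.pvar (Sum.inl 0) [a])))

/-- N^C[a] = ∀X_C{X_C(0), ∀y(X_C(y) → X_C(sy)) → X_C(a)} -/
def NatC (a : Trm) : Fm :=
  .CFall 0
    (.arr (.cvar 0 [Trm.zero])
      (.arr (.fall 1 (.arr (.cvar 0 [Trm.var 1])
                           (.cvar 0 [Trm.succ (Trm.var 1)])))
        (.cvar 0 [a])))

/-- N = ∀X{X, (X → X) → X} -/
def NatP : Fm :=
  .Fall (Sum.inl 0)
    (.arr (.pvar (Sum.inl 0) [])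
      (.arr (.arr (.pvar (Sum.inl 0) []) (.pvar (Sum.inl 0) []))
        (.pvar (Sum.inl 0) [])))

/-- N^C = ∀X_C{X_C, (X_C → X_C) → X_C} -/
def NatPC : Fm :=
  .CFall 0
    (.arr (.cvar 0 [])
      (.arr (.arr (.cvar 0 []) (.cvar 0 []))
        (.cvar 0 [])))

/-- a classical integer of value n (in C2): a closed λC-term of type N[sⁿ(0)] -/
def ClassIntC2 (E : Set (Trm × Trm)) (n : ℕ) (θ : Lam) : Prop :=
  θ.IsLC ∧ θ.Closed ∧ C2 E [] θ (NatF (Trm.num n))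

/-- a classical integer of value n (in M2): a closed λC-term of type N^C[sⁿ(0)] -/
def ClassIntM2 (E : Set (Trm × Trm)) (n : ℕ) (θ : Lam) : Prop :=
  θ.IsLC ∧ θ.Closed ∧ M2 E [] θ (NatC (Trm.num n))


/-! Whether a formula lies in Ω⁺ or Ω⁻ depends only on its shape and on its free second-order
variables, and substituting a first-order term changes neither; this gives (1). For (2), Ω⁻ is
closed under ⊲: instantiating a first-order ∀ preserves Ω⁻ for the same reason, and in a
∀-negative type ∀X A the variable X is not free in A, so instantiating it leaves A unchanged.
Hence B → C ∈ Ω⁻, which means B ∈ Ω⁺ and C ∈ Ω⁻. -/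

namespace Fm

variable {A B : Fm}

theorem pos_arr_iff : (arr A B).Pos ↔ A.Neg ∧ B.Pos :=
  ⟨fun | .arr hA hB => ⟨hA, hB⟩, fun ⟨hA, hB⟩ => .arr hA hB⟩

theorem neg_arr_iff : (arr A B).Neg ↔ A.Pos ∧ B.Neg :=
  ⟨fun | .arr hA hB => ⟨hA, hB⟩, fun ⟨hA, hB⟩ => .arr hA hB⟩

theorem pos_fall_iff {x : ℕ} : (fall x A).Pos ↔ A.Pos :=
  ⟨fun | .fall _ h => h, .fall x⟩

theorem neg_fall_iff {x : ℕ} : (fall x A).Neg ↔ A.Neg :=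
  ⟨fun | .fall _ h => h, .fall x⟩

theorem pos_Fall_iff {X : PIdx} : (Fall X A).Pos ↔ A.Pos :=
  ⟨fun | .Fall _ h => h, .Fall X⟩

theorem neg_Fall_iff {X : PIdx} : (Fall X A).Neg ↔ X ∉ A.fvP ∧ A.Neg :=
  ⟨fun | .Fall _ hX h => ⟨hX, h⟩, fun ⟨hX, h⟩ => .Fall X hX h⟩

theorem not_pos_CFall {X : ℕ} : ¬ (CFall X A).Pos := nofun

theorem not_neg_CFall {X : ℕ} : ¬ (CFall X A).Neg := nofun

theorem fvP_substT (F : Fm) (x : ℕ) (u : Trm) : (F.substT x u).fvP = F.fvP := by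
  induction F with
  | fall y A ih => by_cases h : y = x <;> simp [substT, h, fvP, ih]
  | _ => simp_all [substT, fvP]

theorem substP_eq_self_of_not_mem_fvP {X : PIdx} (h : X ∉ A.fvP) (G : Sop) :
    A.substP X G = A := by
  induction A with
  | pvar Y ts => simp_all [substP, fvP, Ne.symm h]
  | Fall Y A ih =>
    by_cases e : Y = X
    · simp [substP, e]
    · simp_all [substP, fvP, Ne.symm e]
  | _ => simp_all [substP, fvP]

theorem pos_substT_iff_and_neg_substT_iff (F : Fm) (x : ℕ) (u : Trm) :
    ((F.substT x u).Pos ↔ F.Pos) ∧ ((F.substT x u).Neg ↔ F.Neg) := by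
  induction F with
  | arr A B ihA ihB => simp only [substT, pos_arr_iff, neg_arr_iff, ihA, ihB, and_self]
  | fall y A ih =>
    by_cases h : y = x
    · simp [substT, h]
    · simp only [substT, h, if_false, pos_fall_iff, neg_fall_iff, ih, and_self]
  | Fall X A ih => simp only [substT, pos_Fall_iff, neg_Fall_iff, fvP_substT, ih, and_self]
  | CFall X A => simp [substT, not_pos_CFall, not_neg_CFall]
  | _ =>
    exact ⟨iff_of_true (.atom (by constructor)) (.atom (by constructor)),
      iff_of_true (.atom (by constructor)) (.atom (by constructor))⟩

theorem pos_substT_iff (F : Fm) (x : ℕ) (u : Trm) : (F.substT x u).Pos ↔ F.Pos :=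
  (F.pos_substT_iff_and_neg_substT_iff x u).1

theorem neg_substT_iff (F : Fm) (x : ℕ) (u : Trm) : (F.substT x u).Neg ↔ F.Neg :=
  (F.pos_substT_iff_and_neg_substT_iff x u).2

end Fm

theorem FmEq.pos_iff {E : Set (Trm × Trm)} {A B : Fm} (h : FmEq E A B) : A.Pos ↔ B.Pos := by
  induction h with
  | base F x =>
    exact (F.pos_substT_iff x _).trans (F.pos_substT_iff x _).symm
  | refl => rfl
  | trans _ _ ih₁ ih₂ => exact ih₁.trans ih₂

theorem FmEq.neg_iff {E : Set (Trm × Trm)} {A B : Fm} (h : FmEq E A B) : A.Neg ↔ B.Neg := by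
  induction h with
  | base F x =>
    exact (F.neg_substT_iff x _).trans (F.neg_substT_iff x _).symm
  | refl => rfl
  | trans _ _ ih₁ ih₂ => exact ih₁.trans ih₂

theorem SubAF2.neg {A B : Fm} (h : SubAF2 A B) (hA : A.Neg) : B.Neg := by
  induction h with
  | refl => exact hA
  | trans _ _ ih₁ ih₂ => exact ih₂ (ih₁ hA)
  | fallT x A u => exact (A.neg_substT_iff x u).mpr (Fm.neg_fall_iff.mp hA)
  | fallP X A G =>
    obtain ⟨hX, hA⟩ := Fm.neg_Fall_iff.mp hA
    rwa [Fm.substP_eq_self_of_not_mem_fvP hX]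

/-- **Lemma 4.1** :
(1) Ω⁺ and Ω⁻ are closed under the equivalence ≈ ;
(2) if A ∈ Ω⁻ and A ⊲ B → C then B ∈ Ω⁺ and C ∈ Ω⁻. -/
theorem pos_neg_closed (E : Set (Trm × Trm)) :
    (∀ A B : Fm, FmEq E A B → (A.Pos → B.Pos) ∧ (A.Neg → B.Neg)) ∧
    (∀ A B C : Fm, A.Neg → SubAF2 A (.arr B C) → B.Pos ∧ C.Neg) :=
  ⟨fun _ _ h => ⟨h.pos_iff.mp, h.neg_iff.mp⟩,
    fun _ _ _ hA h => Fm.neg_arr_iff.mp (h.neg hA)⟩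

end MixedLogic
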